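/- arXiv:2409.10174 — 2 statements merged into one kernel-verified Lean document; each statement's English description precedes it below -/
import Mathlib

section
/- Let T ~ Binomial(n, 1−q_n) with q_n ∈ (0,1). Then E[T·log(T)·1{T>0}] ≤ n(1−q_n)·log(n(1−q_n) + q_n), and consequently E[T·log(T)·1{T>0}] ≤ n(1−q_n)·log(n(1−q_n)) + n(1−q_n)·log(1 + q_n/(n(1−q_n))). -/
open Finset

lemma sum_binom' (p q : ℝ) (h : p + q = 1) (n : ℕ) :
    ∑ k ∈ Finset.range (n + 1), (n.choose k : ℝ) * p ^ k * q ^ (n - k) = 1 := by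
  have h1 : (1 : ℝ) = (p + q) ^ n := by rw [h, one_pow]
  rw [h1, add_pow]
  exact Finset.sum_congr rfl fun k _ => by ring

lemma shift' (p q : ℝ) (n : ℕ) (f : ℕ → ℝ) :
    ∑ k ∈ Finset.range (n + 2), ((n + 1).choose k : ℝ) * p ^ k * q ^ (n + 1 - k) * ((k : ℝ) * f k)
      = (n + 1) * p *
        ∑ j ∈ Finset.range (n + 1), (n.choose j : ℝ) * p ^ j * q ^ (n - j) * f (j + 1) := by
  rw [Finset.sum_range_succ']
  simp only [Nat.cast_zero, zero_mul, mul_zero, add_zero]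
  rw [Finset.mul_sum]
  refine Finset.sum_congr rfl fun j _ => ?_
  have h1 : ((n + 1).choose (j + 1) : ℝ) * ((j : ℝ) + 1) = ((n : ℝ) + 1) * (n.choose j : ℝ) := by
    exact_mod_cast congrArg (Nat.cast (R := ℝ)) (Nat.add_one_mul_choose_eq n j).symm
  have h2 : n + 1 - (j + 1) = n - j := by omega
  rw [h2]
  push_cast
  linear_combination (p ^ (j + 1) * q ^ (n - j) * f (j + 1)) * h1

lemma moment1' (p q : ℝ) (h : p + q = 1) (n : ℕ) :
    ∑ k ∈ Finset.range (n + 1), (n.choose k : ℝ) * p ^ k * q ^ (n - k) * (k : ℝ) = n * p := by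
  cases n with
  | zero => simp
  | succ m =>
    have := shift' p q m (fun _ => 1)
    simp only [mul_one] at this
    rw [this, sum_binom' p q h m]
    push_cast; ring

lemma moment2' (p q : ℝ) (h : p + q = 1) (m : ℕ) :
    ∑ k ∈ Finset.range (m + 2), ((m + 1).choose k : ℝ) * p ^ k * q ^ (m + 1 - k)
        * ((k : ℝ) * (k : ℝ))
      = ((m : ℝ) + 1) * p * ((m : ℝ) * p + 1) := by
  rw [shift' p q m (fun k => (k : ℝ))]
  have e : ∑ j ∈ Finset.range (m + 1), (m.choose j : ℝ) * p ^ j * q ^ (m - j) * ((j : ℝ) + 1)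
      = m * p + 1 := by
    have h1 := moment1' p q h m
    have h2 := sum_binom' p q h m
    calc ∑ j ∈ Finset.range (m + 1), (m.choose j : ℝ) * p ^ j * q ^ (m - j) * ((j : ℝ) + 1)
        = (∑ j ∈ Finset.range (m + 1), (m.choose j : ℝ) * p ^ j * q ^ (m - j) * (j : ℝ))
          + ∑ j ∈ Finset.range (m + 1), (m.choose j : ℝ) * p ^ j * q ^ (m - j) := by
          rw [← Finset.sum_add_distrib]; exact Finset.sum_congr rfl fun j _ => by ring
      _ = m * p + 1 := by rw [h1, h2]
  push_cast
  rw [e]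

/-- For `T ~ Binomial(n, 1-qₙ)`, the expectation `E[T log T · 1{T>0}]` is written out as
`∑ k, C(n,k) (1-qₙ)^k qₙ^(n-k) · k log k` (the `k = 0` term vanishes). -/
theorem stmt_10 (n : ℕ) (hn : 0 < n) (q : ℝ) (hq : q ∈ Set.Ioo (0 : ℝ) 1) :
    (∑ k ∈ Finset.range (n + 1),
        (n.choose k : ℝ) * (1 - q) ^ k * q ^ (n - k) * ((k : ℝ) * Real.log k)) ≤
        n * (1 - q) * Real.log (n * (1 - q) + q) ∧
    (∑ k ∈ Finset.range (n + 1),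
        (n.choose k : ℝ) * (1 - q) ^ k * q ^ (n - k) * ((k : ℝ) * Real.log k)) ≤
        n * (1 - q) * Real.log (n * (1 - q)) +
          n * (1 - q) * Real.log (1 + q / (n * (1 - q))) := by
  obtain ⟨hq0, hq1⟩ := hq
  set p : ℝ := 1 - q with hp_def
  have hp : 0 < p := by simp [hp_def]; linarith
  have hpq : p + q = 1 := by ring
  have hnp : 0 < (n : ℝ) * p := by positivity
  obtain ⟨m, rfl⟩ : ∃ m, n = m + 1 := ⟨n - 1, by omega⟩
  set N : ℝ := (m : ℝ) + 1 with hN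
  have hNcast : ((m + 1 : ℕ) : ℝ) = N := by push_cast [hN]; ring
  -- weights
  set w : ℕ → ℝ := fun k => ((m + 1).choose k : ℝ) * p ^ k * q ^ (m + 1 - k) * (k : ℝ) / (N * p)
    with hw
  have hNp : 0 < N * p := by have h' := hnp; push_cast at h'; rw [hN]; exact h' 
  have hw_nonneg : ∀ k ∈ Finset.Icc 1 (m + 1), 0 ≤ w k := by
    intro k _
    have : (0:ℝ) ≤ ((m + 1).choose k : ℝ) * p ^ k * q ^ (m + 1 - k) * (k : ℝ) := by positivity
    exact div_nonneg this hNp.le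
  have hsplit : Finset.range (m + 2) = insert 0 (Finset.Icc 1 (m + 1)) := by
    ext x; simp [Finset.mem_range, Finset.mem_Icc]; omega
  have h0 : (0 : ℕ) ∉ Finset.Icc 1 (m + 1) := by simp
  -- sum of weights is 1
  have hsum1 : ∑ k ∈ Finset.Icc 1 (m + 1), w k = 1 := by
    have := moment1' p q hpq (m + 1)
    rw [hsplit, Finset.sum_insert h0] at this
    simp only [Nat.cast_zero, mul_zero, zero_add] at this
    rw [hw]
    rw [← Finset.sum_div, this, hNcast]
    field_simp [(show N ≠ 0 by rw [hN]; positivity)]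
  -- sum w k * k = second moment / (N p)
  have hsum2 : ∑ k ∈ Finset.Icc 1 (m + 1), w k * (k : ℝ) = N * p + q := by
    have := moment2' p q hpq m
    rw [hsplit, Finset.sum_insert h0] at this
    simp only [Nat.cast_zero, mul_zero, zero_mul, zero_add] at this
    have e : ∑ k ∈ Finset.Icc 1 (m + 1), w k * (k : ℝ)
        = (∑ k ∈ Finset.Icc 1 (m + 1),
            ((m + 1).choose k : ℝ) * p ^ k * q ^ (m + 1 - k) * ((k : ℝ) * (k : ℝ))) / (N * p) := by
      rw [Finset.sum_div]
      exact Finset.sum_congr rfl fun k _ => by rw [hw]; ring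
    rw [e, this]
    rw [hN]
    field_simp
    linear_combination (m : ℝ) * p * hpq
  -- Jensen
  have hjensen : ∑ k ∈ Finset.Icc 1 (m + 1), w k * Real.log k ≤ Real.log (N * p + q) := by
    have hcc : ConcaveOn ℝ (Set.Ioi (0:ℝ)) Real.log := strictConcaveOn_log_Ioi.concaveOn
    have := hcc.le_map_sum (t := Finset.Icc 1 (m + 1)) (w := w) (p := fun k => (k : ℝ))
      hw_nonneg hsum1 (fun i hi => by
        simp only [Set.mem_Ioi]
        have : 1 ≤ i := (Finset.mem_Icc.mp hi).1
        exact_mod_cast Nat.lt_of_lt_of_le Nat.zero_lt_one this)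
    simp only [smul_eq_mul] at this
    rwa [hsum2] at this
  -- first bound
  have key : (∑ k ∈ Finset.range (m + 1 + 1),
      ((m + 1).choose k : ℝ) * p ^ k * q ^ (m + 1 - k) * ((k : ℝ) * Real.log k))
      ≤ N * p * Real.log (N * p + q) := by
    have e : (∑ k ∈ Finset.range (m + 1 + 1),
        ((m + 1).choose k : ℝ) * p ^ k * q ^ (m + 1 - k) * ((k : ℝ) * Real.log k))
        = N * p * ∑ k ∈ Finset.Icc 1 (m + 1), w k * Real.log k := by
      rw [hsplit, Finset.sum_insert h0]
      simp only [Nat.cast_zero, zero_mul, mul_zero, zero_add]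
      rw [Finset.mul_sum]
      refine Finset.sum_congr rfl fun k _ => ?_
      rw [hw]
      field_simp [(show N ≠ 0 by rw [hN]; positivity)]
    rw [e]
    exact mul_le_mul_of_nonneg_left hjensen hNp.le
  have hcast2 : ((m + 1 : ℕ) : ℝ) * p = N * p := by rw [hNcast]
  constructor
  · rw [hcast2]; exact key
  · rw [hcast2]
    have hlog : Real.log (N * p + q) = Real.log (N * p) + Real.log (1 + q / (N * p)) := by
      have h1 : N * p + q = (N * p) * (1 + q / (N * p)) := by field_simp [(show N ≠ 0 by rw [hN]; positivity), hp.ne']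
      rw [h1, Real.log_mul hNp.ne' (by positivity)]
    calc _ ≤ N * p * Real.log (N * p + q) := key
      _ = N * p * Real.log (N * p) + N * p * Real.log (1 + q / (N * p)) := by rw [hlog]; ring
end

section
/- Let (T_1, …, T_r) follow a multinomial distribution with k trials and probability vector A_s(p̃) = (p̃_1, …, p̃_s, ρ̃, …, ρ̃) where ρ̃ = (1 − ∑_{j=1}^s p̃_j)/(r−s) and p̃ ∈ Θ_s. Then the maximum likelihood estimator of (p̃_1, …, p̃_s) given an observation (T_1,…,T_r) with all T_j > 0 and T_1 ≥ … ≥ T_r is (T_1/k, …, T_s/k). -/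
/-- The MLE of the restricted multinomial model `M^s_{k_n}` is `(T_1/k, …, T_s/k)`:
it maximizes the log-likelihood over the parameter space `Θ_s`. -/
theorem stmt_14 (s r : ℕ) (hs : 1 ≤ s) (hsr : s < r) (k : ℝ) (hk : 0 < k)
    (T : ℕ → ℝ) (hTpos : ∀ j ∈ Finset.Icc 1 r, 0 < T j)
    (hTmono : ∀ i ∈ Finset.Icc 1 r, ∀ j ∈ Finset.Icc 1 r, i ≤ j → T j ≤ T i)
    (hsum : ∑ j ∈ Finset.Icc 1 r, T j = k)
    (L : (ℕ → ℝ) → ℝ)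
    (hL : L = fun p => ∑ j ∈ Finset.Icc 1 s, T j * Real.log (p j) +
        (∑ j ∈ Finset.Ioc s r, T j) *
          Real.log ((1 - ∑ j ∈ Finset.Icc 1 s, p j) / ((r : ℝ) - s))) :
    ∀ p : ℕ → ℝ, (∀ j ∈ Finset.Icc 1 s, p j ∈ Set.Ioo (0 : ℝ) 1) →
      (∀ i ∈ Finset.Icc 1 s, ∀ j ∈ Finset.Icc 1 s, i ≤ j → p j ≤ p i) →
      (∑ j ∈ Finset.Icc 1 s, p j) < 1 →
      L p ≤ L fun j => T j / k := by
  intro p hp hpmono hPlt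
  subst hL
  simp only
  -- notation
  have hsplit : (∑ j ∈ Finset.Icc 1 s, T j) + (∑ j ∈ Finset.Ioc s r, T j) = k := by
    rw [← hsum, show Finset.Icc 1 s = Finset.Ioc 0 s from (Finset.Icc_add_one_left_eq_Ioc 0 s),
      show Finset.Icc 1 r = Finset.Ioc 0 r from (Finset.Icc_add_one_left_eq_Ioc 0 r)]
    exact Finset.sum_Ioc_consecutive T (Nat.zero_le s) hsr.le
  have hsub : Finset.Icc 1 s ⊆ Finset.Icc 1 r := Finset.Icc_subset_Icc_right hsr.le
  have hTj : ∀ j ∈ Finset.Icc 1 s, 0 < T j := fun j hj => hTpos j (hsub hj)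
  have hSpos : 0 < ∑ j ∈ Finset.Ioc s r, T j := by
    apply Finset.sum_pos
    · intro j hj
      rw [Finset.mem_Ioc] at hj
      exact hTpos j (Finset.mem_Icc.mpr ⟨le_trans hs hj.1.le, hj.2⟩)
    · exact ⟨r, Finset.mem_Ioc.mpr ⟨hsr, le_refl r⟩⟩
  have hrs : (0:ℝ) < (r:ℝ) - (s:ℝ) := sub_pos.mpr (Nat.cast_lt.mpr hsr)
  have h1P : 0 < 1 - ∑ j ∈ Finset.Icc 1 s, p j := sub_pos.mpr hPlt
  set P := ∑ j ∈ Finset.Icc 1 s, p j with hPdef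
  set S := ∑ j ∈ Finset.Ioc s r, T j with hSdef
  set Ts := ∑ j ∈ Finset.Icc 1 s, T j with hTsdef
  -- key pointwise inequality: t * log x - t * log (t/k) ≤ k*x - t
  have key : ∀ (x t : ℝ), 0 < x → 0 < t →
      t * Real.log x - t * Real.log (t / k) ≤ k * x - t := by
    intro x t hx ht
    have htk : 0 < t / k := div_pos ht hk
    have hdiv : Real.log x - Real.log (t / k) = Real.log (x / (t / k)) :=
      (Real.log_div hx.ne' htk.ne').symm
    have hlog : Real.log (x / (t / k)) ≤ x / (t / k) - 1 :=
      Real.log_le_sub_one_of_pos (div_pos hx htk)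
    calc t * Real.log x - t * Real.log (t / k)
        = t * (Real.log x - Real.log (t / k)) := by ring
      _ = t * Real.log (x / (t / k)) := by rw [hdiv]
      _ ≤ t * (x / (t / k) - 1) := mul_le_mul_of_nonneg_left hlog ht.le
      _ = k * x - t := by field_simp
  -- first sum
  have hsum1 : (∑ j ∈ Finset.Icc 1 s, T j * Real.log (p j))
      - (∑ j ∈ Finset.Icc 1 s, T j * Real.log (T j / k)) ≤ k * P - Ts := by
    rw [← Finset.sum_sub_distrib, hPdef, hTsdef, Finset.mul_sum, ← Finset.sum_sub_distrib]
    exact Finset.sum_le_sum fun j hj => key (p j) (T j) (hp j hj).1 (hTj j hj)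
  -- second term
  have hT1 : (1 : ℝ) - ∑ j ∈ Finset.Icc 1 s, T j / k = S / k := by
    rw [← Finset.sum_div, ← hTsdef]
    field_simp
    linarith
  have h2 : S * Real.log ((1 - P) / ((r:ℝ) - s)) - S * Real.log ((S / k) / ((r:ℝ) - s))
      ≤ k * (1 - P) - S := by
    have e1 : Real.log ((1 - P) / ((r:ℝ) - s))
        = Real.log (1 - P) - Real.log ((r:ℝ) - s) := Real.log_div h1P.ne' hrs.ne'
    have e2 : Real.log ((S / k) / ((r:ℝ) - s))
        = Real.log (S / k) - Real.log ((r:ℝ) - s) :=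
      Real.log_div (div_pos hSpos hk).ne' hrs.ne'
    have hkey := key (1 - P) S h1P hSpos
    rw [e1, e2]
    nlinarith [hkey]
  rw [hT1]
  have hexp : k * (1 - P) = k - k * P := by ring
  linarith [hsum1, h2]
end
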